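/- Let ℓ₁ denote the real Banach space of absolutely summable real sequences indexed by ℕ (or by a finite set {1, …, N}) with norm ‖x‖ = Σ_n |x_n|. For every x = (x_n) ∈ B_{ℓ₁}, one has Dc(x) = Δc(x) = 1 + ‖x‖ − 2·sup_n |x_n|. -/

import Mathlib

open Set Metric Filter

variable {X : Type*} [NormedAddCommGroup X] [NormedSpace ℝ X]

/-- The slice `S(f, δ)` of the closed unit ball of `X`, determined by a norm-one functional
`f` and `δ > 0` (the norm and positivity conditions are imposed at use sites). -/
def unitBallSlice (f : X →L[ℝ] ℝ) (δ : ℝ) : Set X :=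
  {y | ‖y‖ ≤ 1 ∧ 1 - δ < f y}

/-- The Daugavet constant of a point: the infimum over all slices of the unit ball of the
supremum of distances from `x` to points of the slice. -/
noncomputable def Dc (x : X) : ℝ :=
  sInf {r | ∃ (f : X →L[ℝ] ℝ) (δ : ℝ), ‖f‖ = 1 ∧ 0 < δ ∧
    r = sSup ((fun y => ‖x - y‖) '' unitBallSlice f δ)}

/-- The Δ-constant of a point: the infimum over all slices of the unit ball containing `x`
of the supremum of distances from `x` to points of the slice. -/
noncomputable def DeltaC (x : X) : ℝ :=
  sInf {r | ∃ (f : X →L[ℝ] ℝ) (δ : ℝ), ‖f‖ = 1 ∧ 0 < δ ∧ x ∈ unitBallSlice f δ ∧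
    r = sSup ((fun y => ‖x - y‖) '' unitBallSlice f δ)}

/-! In `ℓ₁` the line through a unit vector `eₖ` is an L-summand: `‖z‖ = |zₖ| + ‖z - zₖ eₖ‖`.
Norm-one functionals are normed by the `±eₖ`, so every slice contains some `±eₖ`, at distance
`|xₖ ∓ 1| + ‖x‖ - |xₖ| ≥ 1 + ‖x‖ - 2|xₖ|` from `x`. Conversely, for a coordinate `k` where `|xₖ|`
is almost maximal, the slice `{y : ±yₖ > |xₖ| - η}` contains `x`, and splitting off the
coordinate `k` bounds its distance to `x` by `1 + ‖x‖ - 2|xₖ| + 2η`. The finite-dimensional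
case is transported along the isometry `ℓ₁(Fin N) ≃ PiLp 1`. -/

lemma bddAbove_norm_sub_image_unitBallSlice (x : X) (f : X →L[ℝ] ℝ) (δ : ℝ) :
    BddAbove ((fun y => ‖x - y‖) '' unitBallSlice f δ) := by
  refine ⟨‖x‖ + 1, ?_⟩
  rintro r ⟨y, hy, rfl⟩
  linarith [norm_sub_le x y, hy.1]

lemma Dc_eq_and_DeltaC_eq_of_forall_slice {x : X} {v : ℝ}
    (far : ∀ f : X →L[ℝ] ℝ, ‖f‖ = 1 → ∀ δ, 0 < δ → ∃ y ∈ unitBallSlice f δ, v ≤ ‖x - y‖)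
    (near : ∀ ε, 0 < ε → ∃ (f : X →L[ℝ] ℝ) (δ : ℝ), ‖f‖ = 1 ∧ 0 < δ ∧
      x ∈ unitBallSlice f δ ∧ ∀ y ∈ unitBallSlice f δ, ‖x - y‖ ≤ v + ε) :
    Dc x = v ∧ DeltaC x = v := by
  have lower : ∀ f : X →L[ℝ] ℝ, ‖f‖ = 1 → ∀ δ, 0 < δ →
      v ≤ sSup ((fun y => ‖x - y‖) '' unitBallSlice f δ) := by
    intro f hf δ hδ
    obtain ⟨y, hy, hvy⟩ := far f hf δ hδ
    exact hvy.trans (le_csSup (bddAbove_norm_sub_image_unitBallSlice x f δ) ⟨y, hy, rfl⟩)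
  have upper : ∀ w, v < w → ∃ (f : X →L[ℝ] ℝ) (δ : ℝ), ‖f‖ = 1 ∧ 0 < δ ∧
      x ∈ unitBallSlice f δ ∧ sSup ((fun y => ‖x - y‖) '' unitBallSlice f δ) < w := by
    intro w hw
    obtain ⟨f, δ, hf, hδ, hxS, hS⟩ := near ((w - v) / 2) (by linarith)
    refine ⟨f, δ, hf, hδ, hxS, ?_⟩
    refine lt_of_le_of_lt (csSup_le ⟨_, x, hxS, rfl⟩ ?_) (by linarith : v + (w - v) / 2 < w)
    rintro r ⟨y, hy, rfl⟩
    exact hS y hy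
  obtain ⟨f₁, δ₁, hf₁, hδ₁, hxS₁, -⟩ := upper (v + 1) (by linarith)
  constructor
  · refine csInf_eq_of_forall_ge_of_forall_gt_exists_lt ⟨_, f₁, δ₁, hf₁, hδ₁, rfl⟩ ?_ ?_
    · rintro r ⟨f, δ, hf, hδ, rfl⟩
      exact lower f hf δ hδ
    · intro w hw
      obtain ⟨f, δ, hf, hδ, -, hlt⟩ := upper w hw
      exact ⟨_, ⟨f, δ, hf, hδ, rfl⟩, hlt⟩
  · refine csInf_eq_of_forall_ge_of_forall_gt_exists_lt ⟨_, f₁, δ₁, hf₁, hδ₁, hxS₁, rfl⟩ ?_ ?_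
    · rintro r ⟨f, δ, hf, hδ, -, rfl⟩
      exact lower f hf δ hδ
    · intro w hw
      obtain ⟨f, δ, hf, hδ, hxS, hlt⟩ := upper w hw
      exact ⟨_, ⟨f, δ, hf, hδ, hxS, rfl⟩, hlt⟩

section LinearIsometryEquiv

variable {Y : Type*} [NormedAddCommGroup Y] [NormedSpace ℝ Y] (e : X ≃ₗᵢ[ℝ] Y)

lemma unitBallSlice_comp_linearIsometryEquiv (g : Y →L[ℝ] ℝ) (δ : ℝ) :
    unitBallSlice (g.comp (e : X →L[ℝ] Y)) δ = e ⁻¹' unitBallSlice g δ := by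
  ext y
  simp [unitBallSlice]

lemma image_norm_sub_unitBallSlice_comp_linearIsometryEquiv (x : X) (g : Y →L[ℝ] ℝ) (δ : ℝ) :
    (fun y => ‖x - y‖) '' unitBallSlice (g.comp (e : X →L[ℝ] Y)) δ =
      (fun y => ‖e x - y‖) '' unitBallSlice g δ := by
  rw [unitBallSlice_comp_linearIsometryEquiv,
    ← Set.image_preimage_eq (unitBallSlice g δ) e.surjective, Set.image_image,
    Set.preimage_image_eq _ e.injective]
  simp_rw [← map_sub, LinearIsometryEquiv.norm_map]

lemma comp_symm_comp_linearIsometryEquiv (f : X →L[ℝ] ℝ) :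
    (f.comp (e.symm : Y →L[ℝ] X)).comp (e : X →L[ℝ] Y) = f := by
  ext y
  simp

lemma Dc_linearIsometryEquiv (x : X) : Dc (e x) = Dc x := by
  unfold Dc
  congr 1
  ext r
  constructor
  · rintro ⟨g, δ, hg, hδ, rfl⟩
    refine ⟨g.comp (e : X →L[ℝ] Y), δ, ?_, hδ, ?_⟩
    · rwa [ContinuousLinearMap.opNorm_comp_linearIsometryEquiv]
    · rw [image_norm_sub_unitBallSlice_comp_linearIsometryEquiv]
  · rintro ⟨f, δ, hf, hδ, rfl⟩
    refine ⟨f.comp (e.symm : Y →L[ℝ] X), δ, ?_, hδ, ?_⟩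
    · rwa [ContinuousLinearMap.opNorm_comp_linearIsometryEquiv]
    · rw [← image_norm_sub_unitBallSlice_comp_linearIsometryEquiv,
        comp_symm_comp_linearIsometryEquiv]

lemma DeltaC_linearIsometryEquiv (x : X) : DeltaC (e x) = DeltaC x := by
  unfold DeltaC
  congr 1
  ext r
  constructor
  · rintro ⟨g, δ, hg, hδ, hxS, rfl⟩
    refine ⟨g.comp (e : X →L[ℝ] Y), δ, ?_, hδ, ?_, ?_⟩
    · rwa [ContinuousLinearMap.opNorm_comp_linearIsometryEquiv]
    · rwa [unitBallSlice_comp_linearIsometryEquiv]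
    · rw [image_norm_sub_unitBallSlice_comp_linearIsometryEquiv]
  · rintro ⟨f, δ, hf, hδ, hxS, rfl⟩
    refine ⟨f.comp (e.symm : Y →L[ℝ] X), δ, ?_, hδ, ?_, ?_⟩
    · rwa [ContinuousLinearMap.opNorm_comp_linearIsometryEquiv]
    · rwa [← Set.mem_preimage, ← unitBallSlice_comp_linearIsometryEquiv,
        comp_symm_comp_linearIsometryEquiv]
    · rw [← image_norm_sub_unitBallSlice_comp_linearIsometryEquiv,
        comp_symm_comp_linearIsometryEquiv]

end LinearIsometryEquiv

lemma exists_abs_eq_one_mul_eq_abs (a : ℝ) : ∃ s : ℝ, |s| = 1 ∧ s * a = |a| := by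
  rcases le_or_gt 0 a with ha | ha
  · exact ⟨1, by simp, by simp [abs_of_nonneg ha]⟩
  · exact ⟨-1, by simp, by simp [abs_of_neg ha]⟩

namespace lp

variable {ι : Type*}

local notation "ℓ¹" => lp (fun _ : ι => ℝ) 1

lemma abs_apply_le_norm (x : ℓ¹) (k : ι) : |x k| ≤ ‖x‖ :=
  lp.norm_apply_le_norm one_ne_zero x k

lemma evalCLM_apply (k : ι) (z : ℓ¹) : lp.evalCLM ℝ (fun _ : ι => ℝ) 1 k z = z k := rfl

lemma norm_evalCLM (k : ι) : ‖lp.evalCLM ℝ (fun _ : ι => ℝ) 1 k‖ = 1 := by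
  classical
  refine le_antisymm (LinearMap.mkContinuous_norm_le _ zero_le_one _) ?_
  simpa [evalCLM_apply, lp.norm_single] using
    (lp.evalCLM ℝ (fun _ : ι => ℝ) 1 k).le_opNorm (lp.single 1 k 1)

lemma norm_eq_abs_add_norm_sub_single [DecidableEq ι] (z : ℓ¹) (k : ι) :
    ‖z‖ = |z k| + ‖z - lp.single 1 k (z k)‖ := by
  have h := lp.norm_sub_norm_compl_sub_single (p := 1) (by norm_num) z {k}
  simp only [ENNReal.toReal_one, Real.rpow_one, Finset.sum_singleton, Real.norm_eq_abs] at h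
  linarith

lemma norm_sub_single [DecidableEq ι] (x : ℓ¹) (k : ι) (σ : ℝ) :
    ‖x - lp.single 1 k σ‖ = |x k - σ| + (‖x‖ - |x k|) := by
  have h := norm_eq_abs_add_norm_sub_single (x - lp.single 1 k σ) k
  have hk : (x - lp.single 1 k σ : ℓ¹) k = x k - σ := by simp
  rw [hk, sub_sub, ← lp.single_add, add_sub_cancel] at h
  linarith [norm_eq_abs_add_norm_sub_single x k]

lemma norm_sub_le_abs_sub_add (x y : ℓ¹) (k : ι) :
    ‖x - y‖ ≤ |x k - y k| + (‖x‖ - |x k|) + (‖y‖ - |y k|) := by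
  classical
  have h := norm_eq_abs_add_norm_sub_single (x - y) k
  have hk : (x - y) k = x k - y k := by simp
  have hsplit : x - y - lp.single 1 k (x k - y k) =
      (x - lp.single 1 k (x k)) - (y - lp.single 1 k (y k)) := by
    rw [lp.single_sub]; abel
  rw [hk, hsplit] at h
  linarith [_root_.norm_sub_le (x - lp.single 1 k (x k)) (y - lp.single 1 k (y k)),
    norm_eq_abs_add_norm_sub_single x k, norm_eq_abs_add_norm_sub_single y k]

lemma apply_single [DecidableEq ι] (f : ℓ¹ →L[ℝ] ℝ) (k : ι) (a : ℝ) :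
    f (lp.single 1 k a) = a * f (lp.single 1 k 1) := by
  rw [← smul_eq_mul a, ← map_smul, ← lp.single_smul, smul_eq_mul, mul_one]

lemma opNorm_le_of_forall_abs_apply_single_le [DecidableEq ι] (f : ℓ¹ →L[ℝ] ℝ) {B : ℝ}
    (hB : 0 ≤ B) (h : ∀ k, |f (lp.single 1 k 1)| ≤ B) : ‖f‖ ≤ B := by
  refine f.opNorm_le_bound hB fun z => ?_
  have hf : HasSum (fun k => f (lp.single 1 k (z k))) (f z) :=
    (lp.hasSum_single ENNReal.one_ne_top z).mapL f
  have hB : HasSum (fun k => B * |z k|) (B * ‖z‖) := by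
    simpa using (lp.hasSum_norm (p := 1) (by norm_num) z).mul_left B
  refine hf.norm_le_of_bounded hB fun k => ?_
  rw [apply_single, Real.norm_eq_abs, abs_mul, mul_comm]
  exact mul_le_mul_of_nonneg_right (h k) (abs_nonneg _)

lemma exists_one_sub_lt_abs_apply_single [DecidableEq ι] {f : ℓ¹ →L[ℝ] ℝ} (hf : ‖f‖ = 1)
    {δ : ℝ} (hδ : 0 < δ) : ∃ k, 1 - δ < |f (lp.single 1 k 1)| := by
  by_contra! h
  have hle := opNorm_le_of_forall_abs_apply_single_le f (le_max_right (1 - δ) 0)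
    fun k => (h k).trans (le_max_left _ _)
  rw [hf] at hle
  exact (max_lt (by linarith) one_pos).not_ge hle

lemma exists_mem_unitBallSlice_le_norm_sub (x : ℓ¹) {f : ℓ¹ →L[ℝ] ℝ} (hf : ‖f‖ = 1) {δ : ℝ}
    (hδ : 0 < δ) : ∃ k, ∃ y ∈ unitBallSlice f δ, 1 + ‖x‖ - 2 * |x k| ≤ ‖x - y‖ := by
  classical
  obtain ⟨k, hk⟩ := exists_one_sub_lt_abs_apply_single hf hδ
  obtain ⟨σ, hσ, hσf⟩ := exists_abs_eq_one_mul_eq_abs (f (lp.single 1 k 1))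
  refine ⟨k, lp.single 1 k σ, ⟨?_, ?_⟩, ?_⟩
  · rw [lp.norm_single (by norm_num), Real.norm_eq_abs, hσ]
  · rwa [apply_single, hσf]
  · have h := abs_sub_abs_le_abs_sub σ (x k)
    rw [hσ, abs_sub_comm] at h
    rw [norm_sub_single]
    linarith

lemma exists_unitBallSlice_norm_sub_le (x : ℓ¹) (hx : ‖x‖ ≤ 1) (k : ι) {η : ℝ} (hη : 0 < η) :
    ∃ (f : ℓ¹ →L[ℝ] ℝ) (δ : ℝ), ‖f‖ = 1 ∧ 0 < δ ∧ x ∈ unitBallSlice f δ ∧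
      ∀ y ∈ unitBallSlice f δ, ‖x - y‖ ≤ 1 + ‖x‖ - 2 * |x k| + 2 * η := by
  obtain ⟨s, hs, hsx⟩ := exists_abs_eq_one_mul_eq_abs (x k)
  have hxk := abs_apply_le_norm x k
  refine ⟨s • lp.evalCLM ℝ (fun _ : ι => ℝ) 1 k, 1 - |x k| + η, ?_, by linarith, ⟨hx, ?_⟩, ?_⟩
  · rw [norm_smul, Real.norm_eq_abs, hs, norm_evalCLM, one_mul]
  · rw [_root_.smul_apply, evalCLM_apply, smul_eq_mul, hsx]
    linarith
  · rintro y ⟨hy, hyf⟩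
    rw [_root_.smul_apply, evalCLM_apply, smul_eq_mul] at hyf
    have hyk : s * y k ≤ |y k| := (le_abs_self _).trans (by rw [abs_mul, hs, one_mul])
    have hxy : |x k - y k| = |(|x k|) - s * y k| := by
      rw [← hsx, ← mul_sub, abs_mul, hs, one_mul]
    have h := norm_sub_le_abs_sub_add x y k
    rw [hxy] at h
    rcases abs_cases (|x k| - s * y k) with ⟨habs, _⟩ | ⟨habs, _⟩ <;> linarith

theorem Dc_eq_and_DeltaC_eq_of_norm_le_one [Nonempty ι] (x : ℓ¹) (hx : ‖x‖ ≤ 1) :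
    Dc x = 1 + ‖x‖ - 2 * (⨆ k, |x k|) ∧ DeltaC x = 1 + ‖x‖ - 2 * (⨆ k, |x k|) := by
  have hbdd : BddAbove (Set.range fun k => |x k|) :=
    ⟨‖x‖, by rintro _ ⟨k, rfl⟩; exact abs_apply_le_norm x k⟩
  refine Dc_eq_and_DeltaC_eq_of_forall_slice (fun f hf δ hδ => ?_) (fun ε hε => ?_)
  · obtain ⟨k, y, hy, hxy⟩ := exists_mem_unitBallSlice_le_norm_sub x hf hδ
    exact ⟨y, hy, le_trans (by linarith [le_ciSup hbdd k]) hxy⟩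
  · obtain ⟨k, hk⟩ := exists_lt_of_lt_ciSup (sub_lt_self (⨆ k, |x k|) (by linarith : 0 < ε / 4))
    obtain ⟨f, δ, hf, hδ, hxS, hS⟩ :=
      exists_unitBallSlice_norm_sub_le x hx k (by linarith : 0 < ε / 4)
    exact ⟨f, δ, hf, hδ, hxS, fun y hy => (hS y hy).trans (by linarith)⟩

end lp

theorem PiLp.Dc_eq_and_DeltaC_eq_of_norm_le_one {ι : Type*} [Fintype ι] [Nonempty ι]
    (x : PiLp 1 (fun _ : ι => ℝ)) (hx : ‖x‖ ≤ 1) :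
    Dc x = 1 + ‖x‖ - 2 * (⨆ k, |x k|) ∧ DeltaC x = 1 + ‖x‖ - 2 * (⨆ k, |x k|) := by
  let e := lpPiLpₗᵢ (fun _ : ι => ℝ) ℝ (p := 1)
  obtain ⟨y, rfl⟩ := e.surjective x
  rw [Dc_linearIsometryEquiv, DeltaC_linearIsometryEquiv, e.norm_map] at *
  exact lp.Dc_eq_and_DeltaC_eq_of_norm_le_one y hx

/-- In `ℓ₁` (indexed by `ℕ`, or by a finite set `Fin N`),
`Dc(x) = Δc(x) = 1 + ‖x‖ − 2·sup_n |x_n|`. -/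
theorem daugavetConstant_l1 :
    (∀ x : lp (fun _ : ℕ => ℝ) 1, ‖x‖ ≤ 1 →
        Dc x = 1 + ‖x‖ - 2 * (⨆ n : ℕ, |x n|) ∧
        DeltaC x = 1 + ‖x‖ - 2 * (⨆ n : ℕ, |x n|)) ∧
    (∀ (N : ℕ), 0 < N → ∀ x : PiLp 1 (fun _ : Fin N => ℝ), ‖x‖ ≤ 1 →
        Dc x = 1 + ‖x‖ - 2 * (⨆ n : Fin N, |x n|) ∧
        DeltaC x = 1 + ‖x‖ - 2 * (⨆ n : Fin N, |x n|)) := by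
  refine ⟨lp.Dc_eq_and_DeltaC_eq_of_norm_le_one, fun N hN x hx => ?_⟩
  have := Fin.pos_iff_nonempty.mp hN
  exact PiLp.Dc_eq_and_DeltaC_eq_of_norm_le_one x hx
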